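/- arXiv:1908.07493 — 3 statements merged into one kernel-verified Lean document; each statement's English description precedes it below -/
import Mathlib

section
/- Fix β ∈ (0, 1/2). For every ε > 0 there exists N such that for all n ≥ N the following holds. Let V be a finite set with |V| = n, let t and b be nonnegative integers with t + b = n and 0 ≤ t − b ≤ n^{1/2−β}, and let O ⊆ V with n^{1−β} ≤ |O| ≤ n/2. Then the number of subsets T ⊆ V with |T| = t and |T \ O| ≥ |(V \ T) \ O| is at most (1/2 + ε)·C(n, t), where C(n, t) is the binomial coefficient. Equivalently, for a uniformly random subset T of V of size t (with B = V \ T), the probability that |T \ O| ≥ |B \ O| is at most 1/2 + ε. -/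
/-!
Split `T` according to `u = |T \ O|`. With `s = |V \ O|`, `m = |O|` and `d = t - b`, the
condition on `T` reads `s ≤ 2u`, and exactly `C(s, u) C(m, t - u)` sets `T` have a given `u`.
The reflection `u ↦ s + d - u` sends the terms with `2u > s + 2d` injectively to terms with
`2u < s` without decreasing them, so the good sets exceed half of `C(n, t)` by at most the
`d + 1` terms of the window `s ≤ 2u ≤ s + 2d`, each at most `C(s, s/2) C(m, m/2)`. The central
estimates `(k + 1) C(k, k/2)² ≤ 4^k ≤ 4k C(k, k/2)²` together with `C(n, n/2) ≤ 2 C(n, t)` show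
that this window is a fraction `O(d / √m) = O(n^(-β/2))` of `C(n, t)`.
-/

open Finset

namespace Nat

theorem two_mul_choose_odd_half (r : ℕ) : 2 * (2 * r + 1).choose r = centralBinom (r + 1) := by
  rw [centralBinom_eq_two_mul_choose, show 2 * (r + 1) = (2 * r + 1) + 1 by ring,
    choose_succ_succ, choose_symm_half]
  ring

theorem two_mul_add_one_mul_centralBinom_sq_le (r : ℕ) :
    (2 * r + 1) * centralBinom r ^ 2 ≤ 16 ^ r := by
  induction r with
  | zero => simp
  | succ r ih =>
    have hrec := succ_mul_centralBinom_succ r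
    refine le_of_mul_le_mul_left (a := (r + 1) ^ 2) ?_ (by positivity)
    calc (r + 1) ^ 2 * ((2 * (r + 1) + 1) * centralBinom (r + 1) ^ 2)
        = (2 * r + 3) * ((r + 1) * centralBinom (r + 1)) ^ 2 := by ring
      _ = 4 * (2 * r + 1) * (2 * r + 3) * ((2 * r + 1) * centralBinom r ^ 2) := by
          rw [hrec]; ring
      _ ≤ 16 * (r + 1) ^ 2 * 16 ^ r :=
          Nat.mul_le_mul (by nlinarith) ih
      _ = (r + 1) ^ 2 * 16 ^ (r + 1) := by ring

theorem sixteen_pow_le_mul_centralBinom_sq {r : ℕ} (hr : 0 < r) :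
    16 ^ r ≤ 4 * r * centralBinom r ^ 2 := by
  induction r, hr using Nat.le_induction with
  | base => decide
  | succ r hr ih =>
    have hrec := succ_mul_centralBinom_succ r
    refine le_of_mul_le_mul_left (a := (r + 1) ^ 2) ?_ (by positivity)
    calc (r + 1) ^ 2 * 16 ^ (r + 1) = (16 * (r + 1) ^ 2) * 16 ^ r := by ring
      _ ≤ (16 * (r + 1) ^ 2) * (4 * r * centralBinom r ^ 2) := Nat.mul_le_mul_left _ ih
      _ = (16 * (r + 1) * (4 * r * (r + 1))) * centralBinom r ^ 2 := by ring
      _ ≤ (16 * (r + 1) * (2 * r + 1) ^ 2) * centralBinom r ^ 2 := by gcongr; nlinarith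
      _ = (r + 1) ^ 2 * (4 * (r + 1) * centralBinom (r + 1) ^ 2) := by
          rw [show (r + 1) ^ 2 * (4 * (r + 1) * centralBinom (r + 1) ^ 2)
            = 4 * (r + 1) * ((r + 1) * centralBinom (r + 1)) ^ 2 by ring, hrec]
          ring

theorem succ_mul_choose_half_sq_le (k : ℕ) : (k + 1) * k.choose (k / 2) ^ 2 ≤ 4 ^ k := by
  obtain ⟨r, rfl | rfl⟩ := even_or_odd' k
  · have h := two_mul_add_one_mul_centralBinom_sq_le r
    rwa [show 2 * r / 2 = r by omega, ← centralBinom_eq_two_mul_choose, pow_mul]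
  · have h := two_mul_add_one_mul_centralBinom_sq_le (r + 1)
    rw [← two_mul_choose_odd_half] at h
    rw [show (2 * r + 1) / 2 = r by omega]
    have : 4 * 4 ^ (2 * r + 1) = 16 ^ (r + 1) := by rw [pow_succ, pow_mul]; norm_num; ring
    nlinarith

theorem four_pow_le_mul_choose_half_sq {k : ℕ} (hk : 0 < k) :
    4 ^ k ≤ 4 * k * k.choose (k / 2) ^ 2 := by
  obtain ⟨r, rfl | rfl⟩ := even_or_odd' k
  · have h := sixteen_pow_le_mul_centralBinom_sq (r := r) (by omega)
    rw [show 2 * r / 2 = r by omega, ← centralBinom_eq_two_mul_choose, pow_mul]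
    norm_num; nlinarith
  · have h := sixteen_pow_le_mul_centralBinom_sq (r := r + 1) (by omega)
    rw [← two_mul_choose_odd_half] at h
    rw [show (2 * r + 1) / 2 = r by omega]
    have : 4 * 4 ^ (2 * r + 1) = 16 ^ (r + 1) := by rw [pow_succ, pow_mul]; norm_num; ring
    nlinarith

theorem choose_mul_pow_le_choose_add_mul_pow {n t b k i : ℕ} (htb : t + b = n)
    (hi : k + i ≤ t) : n.choose k * b ^ i ≤ n.choose (k + i) * t ^ i := by
  induction i with
  | zero => simp
  | succ i ih =>
    have hrec := Nat.choose_succ_right_eq n (k + i)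
    have hstep : b * (k + i + 1) ≤ (n - (k + i)) * t :=
      Nat.mul_le_mul (by omega) (by omega)
    refine Nat.le_of_mul_le_mul_right (c := k + i + 1) ?_ (by omega)
    calc n.choose k * b ^ (i + 1) * (k + i + 1)
        = n.choose k * b ^ i * (b * (k + i + 1)) := by ring
      _ ≤ n.choose (k + i) * t ^ i * ((n - (k + i)) * t) :=
          Nat.mul_le_mul (ih (by omega)) hstep
      _ = n.choose (k + i + 1) * (k + i + 1) * t ^ i * t := by rw [hrec]; ring
      _ = n.choose (k + (i + 1)) * t ^ (i + 1) * (k + i + 1) := by rw [← add_assoc]; ring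

theorem pow_le_two_mul_pow {t b e : ℕ} (hbt : b ≤ t) (ht : 0 < t)
    (h : 2 * e * (t - b) ≤ t) : t ^ e ≤ 2 * b ^ e := by
  have htR : (0 : ℝ) < t := by exact_mod_cast ht
  have hbtR : (b : ℝ) ≤ t := by exact_mod_cast hbt
  have hR : 2 * (e : ℝ) * (t - b) ≤ t := by
    have := (Nat.cast_le (α := ℝ)).mpr h
    push_cast [Nat.cast_sub hbt] at this
    exact this
  have hbern := one_add_mul_le_pow (a := -(((t : ℝ) - b) / t))
    (by rw [neg_le_neg_iff, div_le_iff₀ htR]; linarith [b.cast_nonneg (α := ℝ)]) e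
  rw [show (1 : ℝ) + -((t - b) / t) = b / t by field_simp; ring, div_pow,
    le_div_iff₀ (by positivity)] at hbern
  have hhalf : (e : ℝ) * ((t - b) / t) ≤ 1 / 2 := by
    rw [← mul_div_assoc, div_le_iff₀ htR]; linarith
  have : ((t ^ e : ℕ) : ℝ) ≤ ((2 * b ^ e : ℕ) : ℝ) := by
    push_cast; nlinarith [pow_pos htR e]
  exact_mod_cast this

theorem choose_half_le_two_mul_choose {n t b : ℕ} (htb : t + b = n) (hbt : b ≤ t)
    (hd : (t - b) * (t - b + 1) ≤ t) : n.choose (n / 2) ≤ 2 * n.choose t := by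
  rcases Nat.eq_zero_or_pos b with rfl | hb
  · simp only [Nat.sub_zero] at hd
    obtain rfl : t = 0 := by nlinarith
    simp [← htb]
  have hratio := choose_mul_pow_le_choose_add_mul_pow (k := n / 2) (i := t - n / 2) htb
    (by omega)
  rw [show n / 2 + (t - n / 2) = t by omega] at hratio
  have hpow := pow_le_two_mul_pow (e := t - n / 2) hbt (by omega) (by
    calc 2 * (t - n / 2) * (t - b) ≤ (t - b + 1) * (t - b) := by gcongr; omega
      _ ≤ t := by rw [mul_comm]; exact hd)
  refine Nat.le_of_mul_le_mul_right (c := b ^ (t - n / 2)) ?_ (by positivity)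
  calc n.choose (n / 2) * b ^ (t - n / 2) ≤ n.choose t * t ^ (t - n / 2) := hratio
    _ ≤ n.choose t * (2 * b ^ (t - n / 2)) := Nat.mul_le_mul_left _ hpow
    _ = 2 * n.choose t * b ^ (t - n / 2) := by ring

theorem choose_le_choose_of_half_le {s a c : ℕ} (hs : s ≤ 2 * a) (hac : a ≤ c) :
    s.choose c ≤ s.choose a := by
  induction c, hac using Nat.le_induction with
  | base => rfl
  | succ c hac ih =>
    refine le_trans (Nat.le_of_mul_le_mul_right (c := c + 1) ?_ (by omega)) ih
    rw [Nat.choose_succ_right_eq]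
    exact Nat.mul_le_mul_left _ (by omega)

theorem choose_mul_choose_le_reflect {s m t d u : ℕ} (h : s + m + d = 2 * t)
    (hu : s + 2 * d < 2 * u) (hus : u ≤ s) (hut : u ≤ t) :
    s.choose u * m.choose (t - u) ≤ s.choose (s + d - u) * m.choose (t - (s + d - u)) := by
  rcases lt_or_ge m (t - u) with hm | hm
  · simp [Nat.choose_eq_zero_of_lt hm]
  have hs : s.choose (s + d - u) = s.choose (u - d) := by
    rw [← Nat.choose_symm (by omega : s + d - u ≤ s)]; congr 1; omega
  have hm' : m.choose (t - (s + d - u)) = m.choose (t - u) := by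
    rw [← Nat.choose_symm hm]; congr 1; omega
  rw [hs, hm']
  exact Nat.mul_le_mul_right _ (choose_le_choose_of_half_le (by omega) (by omega))

theorem sum_choose_mul_choose_window_le (s m t d : ℕ) :
    ∑ u ∈ range (t + 1) with s ≤ 2 * u ∧ 2 * u ≤ s + 2 * d, s.choose u * m.choose (t - u) ≤
      (d + 1) * (s.choose (s / 2) * m.choose (m / 2)) :=
  calc _ ≤ #{u ∈ range (t + 1) | s ≤ 2 * u ∧ 2 * u ≤ s + 2 * d} •
          (s.choose (s / 2) * m.choose (m / 2)) :=
        sum_le_card_nsmul _ _ _ fun u _ =>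
          Nat.mul_le_mul (choose_le_middle u s) (choose_le_middle (t - u) m)
    _ ≤ #(Icc (s / 2) (s / 2 + d)) • (s.choose (s / 2) * m.choose (m / 2)) := by
        gcongr
        intro u hu
        simp only [mem_filter, mem_Icc] at hu ⊢
        omega
    _ = (d + 1) * (s.choose (s / 2) * m.choose (m / 2)) := by
        rw [card_Icc, smul_eq_mul]; congr 1; omega

theorem sum_choose_mul_choose_tail_le {s m t d : ℕ} (h : s + m + d = 2 * t) :
    ∑ u ∈ range (t + 1) with s ≤ 2 * u ∧ ¬ 2 * u ≤ s + 2 * d, s.choose u * m.choose (t - u) ≤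
      ∑ u ∈ range (t + 1) with ¬ s ≤ 2 * u, s.choose u * m.choose (t - u) := by
  set g : ℕ → ℕ := fun u => s.choose u * m.choose (t - u)
  rw [← sum_filter_of_ne (p := (· ≤ s)) fun u _ hu => by
    by_contra hus; exact hu (by simp [choose_eq_zero_of_lt (not_le.mp hus)]), filter_filter]
  set R := {u ∈ range (t + 1) | (s ≤ 2 * u ∧ ¬2 * u ≤ s + 2 * d) ∧ u ≤ s}
  have hR : ∀ u ∈ R, u ≤ t ∧ s + 2 * d < 2 * u ∧ u ≤ s := fun u hu => by
    simp only [R, mem_filter, mem_range] at hu; omega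
  calc ∑ u ∈ R, g u ≤ ∑ u ∈ R, g (s + d - u) := sum_le_sum fun u hu =>
        choose_mul_choose_le_reflect h (hR u hu).2.1 (hR u hu).2.2 (hR u hu).1
    _ = ∑ v ∈ R.image (s + d - ·), g v :=
        (sum_image fun u hu v hv huv => by have := hR u hu; have := hR v hv; omega).symm
    _ ≤ ∑ u ∈ range (t + 1) with ¬s ≤ 2 * u, g u := by
        refine sum_le_sum_of_subset fun v hv => ?_
        obtain ⟨u, hu, rfl⟩ := mem_image.mp hv
        have := hR u hu
        simp only [mem_filter, mem_range]
        omega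

theorem sum_choose_mul_choose_upper_le {s m t d : ℕ} (h : s + m + d = 2 * t) :
    ∑ u ∈ range (t + 1) with s ≤ 2 * u, s.choose u * m.choose (t - u) ≤
      ∑ u ∈ range (t + 1) with ¬ s ≤ 2 * u, s.choose u * m.choose (t - u) +
        (d + 1) * (s.choose (s / 2) * m.choose (m / 2)) := by
  rw [← sum_filter_add_sum_filter_not _ (fun u => 2 * u ≤ s + 2 * d), filter_filter,
    filter_filter, add_comm]
  exact add_le_add (sum_choose_mul_choose_tail_le h) (sum_choose_mul_choose_window_le s m t d)

end Nat

section Counting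
variable {V : Type*} [Fintype V] [DecidableEq V]

theorem card_filter_card_sdiff_eq (O : Finset V) {t u : ℕ} (hu : u ≤ t) :
    #{T ∈ powersetCard t univ | #(T \ O) = u} = (#Oᶜ).choose u * (#O).choose (t - u) := by
  have hunion_sdiff {A B : Finset V} (hA : A ⊆ Oᶜ) (hB : B ⊆ O) : (A ∪ B) \ O = A := by
    grind [mem_compl]
  have hunion_inter {A B : Finset V} (hA : A ⊆ Oᶜ) (hB : B ⊆ O) : (A ∪ B) ∩ O = B := by
    grind [mem_compl]
  rw [← card_powersetCard, ← card_powersetCard, ← card_product]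
  refine card_nbij' (fun T => (T \ O, T ∩ O)) (fun P => P.1 ∪ P.2) ?_ ?_ ?_ ?_
  · intro T hT
    simp only [coe_filter, mem_powersetCard_univ, Set.mem_ofPred_eq] at hT
    have := card_sdiff_add_card_inter T O
    simp only [coe_product, Set.mem_prod, mem_coe, mem_powersetCard]
    refine ⟨⟨fun x hx => ?_, hT.2⟩, inter_subset_right, by omega⟩
    simp_all
  · rintro ⟨A, B⟩ hAB
    simp only [coe_product, Set.mem_prod, mem_coe, mem_powersetCard] at hAB
    obtain ⟨⟨hA, hAc⟩, ⟨hB, hBc⟩⟩ := hAB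
    simp only [coe_filter, mem_powersetCard_univ, Set.mem_ofPred_eq]
    refine ⟨?_, by rw [hunion_sdiff hA hB, hAc]⟩
    rw [card_union_of_disjoint (disjoint_compl_left.mono hA hB), hAc, hBc]
    omega
  · intro T _
    exact sdiff_union_inter T O
  · rintro ⟨A, B⟩ hAB
    simp only [coe_product, Set.mem_prod, mem_coe, mem_powersetCard] at hAB
    simp [hunion_sdiff hAB.1.1 hAB.2.1, hunion_inter hAB.1.1 hAB.2.1]

theorem card_filter_eq_sum_choose_mul_choose (O : Finset V) (t : ℕ) (P : ℕ → Prop)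
    [DecidablePred P] :
    #{T ∈ powersetCard t univ | P #(T \ O)} =
      ∑ u ∈ range (t + 1) with P u, (#Oᶜ).choose u * (#O).choose (t - u) := by
  rw [card_eq_sum_card_fiberwise (f := fun T => #(T \ O)) (t := {u ∈ range (t + 1) | P u})]
  · refine sum_congr rfl fun u hu => ?_
    rw [mem_filter, mem_range] at hu
    rw [← card_filter_card_sdiff_eq O (by omega), filter_filter]
    congr 1
    exact filter_congr fun T _ => ⟨And.right, fun h => ⟨h ▸ hu.2, h⟩⟩
  · intro T hT
    simp only [coe_filter, mem_powersetCard_univ, Set.mem_ofPred_eq] at hT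
    simp only [coe_filter, mem_range, Set.mem_ofPred_eq]
    exact ⟨by have := card_le_card (sdiff_subset (s := T) (t := O)); omega, hT.2⟩

theorem card_sdiff_compl_add_card_sdiff (T O : Finset V) :
    #((univ \ T) \ O) + #(T \ O) = #Oᶜ := by
  rw [← card_union_of_disjoint (by grind [disjoint_left])]
  congr 1
  grind [mem_compl]

theorem two_mul_card_filter_le (O : Finset V) {t b : ℕ} (htb : t + b = Fintype.card V)
    (hbt : b ≤ t) :
    2 * #{T ∈ powersetCard t univ | #((univ \ T) \ O) ≤ #(T \ O)} ≤
      (Fintype.card V).choose t +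
        (t - b + 1) * ((#Oᶜ).choose (#Oᶜ / 2) * (#O).choose (#O / 2)) := by
  have hfilter : {T ∈ powersetCard t (univ : Finset V) | #((univ \ T) \ O) ≤ #(T \ O)} =
      {T ∈ powersetCard t (univ : Finset V) | #Oᶜ ≤ 2 * #(T \ O)} :=
    filter_congr fun T _ => by have := card_sdiff_compl_add_card_sdiff T O; omega
  have htotal := card_filter_add_card_filter_not (s := powersetCard t (univ : Finset V))
    (fun T => #Oᶜ ≤ 2 * #(T \ O))
  rw [card_powersetCard, card_univ, card_filter_eq_sum_choose_mul_choose O t (#Oᶜ ≤ 2 * ·),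
    card_filter_eq_sum_choose_mul_choose O t (¬ #Oᶜ ≤ 2 * ·)] at htotal
  rw [hfilter, card_filter_eq_sum_choose_mul_choose O t (#Oᶜ ≤ 2 * ·)]
  have hupper := Nat.sum_choose_mul_choose_upper_le (s := #Oᶜ) (m := #O) (t := t) (d := t - b)
    (by rw [card_compl]; have := card_le_univ O; omega)
  omega

end Counting

theorem succ_sq_le_four_mul_rpow_neg_mul {β : ℝ} (hβ : β < 1 / 2) {n d : ℕ} {m c : ℝ}
    (hn : 1 ≤ n) (hd : (d : ℝ) ≤ (n : ℝ) ^ ((1 : ℝ) / 2 - β)) (hm : (n : ℝ) ^ (1 - β) ≤ m)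
    (hc : (n : ℝ) ^ (-β) ≤ c) :
    ((d : ℝ) + 1) ^ 2 ≤ 4 * c * m := by
  have hn0 : (0 : ℝ) < n := by exact_mod_cast hn
  have hX1 : 1 ≤ (n : ℝ) ^ ((1 : ℝ) / 2 - β) :=
    Real.one_le_rpow (by exact_mod_cast hn) (by linarith)
  have hX2 : ((n : ℝ) ^ ((1 : ℝ) / 2 - β)) ^ 2 = (n : ℝ) ^ (-β) * (n : ℝ) ^ (1 - β) := by
    rw [← Real.rpow_natCast, ← Real.rpow_mul hn0.le, ← Real.rpow_add hn0]
    norm_num; ring_nf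
  calc ((d : ℝ) + 1) ^ 2 ≤ (2 * (n : ℝ) ^ ((1 : ℝ) / 2 - β)) ^ 2 := by gcongr; linarith
    _ = 4 * (n : ℝ) ^ (-β) * (n : ℝ) ^ (1 - β) := by rw [mul_pow, hX2]; ring
    _ ≤ 4 * c * m := by gcongr; linarith [Real.rpow_nonneg hn0.le (-β)]

theorem succ_mul_choose_half_mul_choose_half_le {s m d c : ℕ} {ε : ℝ} (hε : 0 ≤ ε)
    (hc : 4 ^ (s + m) ≤ 16 * (s + m) * c ^ 2) (hms : m ≤ s)
    (hd : ((d : ℝ) + 1) ^ 2 ≤ ε ^ 2 / 8 * m) :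
    (((d + 1) * (s.choose (s / 2) * m.choose (m / 2)) : ℕ) : ℝ) ≤ 2 * ε * c := by
  have hs : ((s : ℝ) + 1) * (s.choose (s / 2) : ℝ) ^ 2 ≤ 4 ^ s := by
    exact_mod_cast Nat.succ_mul_choose_half_sq_le s
  have hm : ((m : ℝ) + 1) * (m.choose (m / 2) : ℝ) ^ 2 ≤ 4 ^ m := by
    exact_mod_cast Nat.succ_mul_choose_half_sq_le m
  have hcR : (4 : ℝ) ^ s * 4 ^ m ≤ 16 * (s + m) * (c : ℝ) ^ 2 := by
    rw [← pow_add]; exact_mod_cast hc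
  have hmsR : (m : ℝ) ≤ s := by exact_mod_cast hms
  have hpos : (0 : ℝ) < (s + 1) * (m + 1) := by positivity
  push_cast
  rw [← pow_le_pow_iff_left₀ (by positivity) (by positivity) two_ne_zero,
    ← mul_le_mul_iff_left₀ hpos]
  calc (((d : ℝ) + 1) * ((s.choose (s / 2) : ℝ) * m.choose (m / 2))) ^ 2 * ((s + 1) * (m + 1))
      = ((d : ℝ) + 1) ^ 2 * (((s : ℝ) + 1) * (s.choose (s / 2) : ℝ) ^ 2) *
          (((m : ℝ) + 1) * (m.choose (m / 2) : ℝ) ^ 2) := by ring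
    _ ≤ ((d : ℝ) + 1) ^ 2 * 4 ^ s * 4 ^ m := by gcongr
    _ ≤ ((d : ℝ) + 1) ^ 2 * (16 * (s + m) * (c : ℝ) ^ 2) := by rw [mul_assoc]; gcongr
    _ ≤ ε ^ 2 / 8 * m * (16 * (2 * s) * (c : ℝ) ^ 2) := by gcongr; linarith
    _ = (2 * ε * c) ^ 2 * (s * m) := by ring
    _ ≤ (2 * ε * c) ^ 2 * ((s + 1) * (m + 1)) := by gcongr <;> linarith

/-- Fix `β ∈ (0, 1/2)`.  For every `ε > 0` there is `N` such that for all
`n ≥ N`: if `|V| = n`, `t + b = n`, `0 ≤ t - b ≤ n^(1/2-β)`, and `O ⊆ V` with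
`n^(1-β) ≤ |O| ≤ n/2`, then the number of subsets `T ⊆ V` with `|T| = t` and
`|T \ O| ≥ |(V \ T) \ O|` is at most `(1/2 + ε) · C(n, t)`. -/
theorem statement1 (β : ℝ) (hβ0 : 0 < β) (hβ1 : β < 1 / 2) :
    ∀ ε : ℝ, 0 < ε → ∃ N : ℕ, ∀ n : ℕ, N ≤ n →
      ∀ (V : Type) [Fintype V] [DecidableEq V], Fintype.card V = n →
        ∀ t b : ℕ, t + b = n → b ≤ t → (t : ℝ) - b ≤ (n : ℝ) ^ ((1 : ℝ) / 2 - β) →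
          ∀ O : Finset V, (n : ℝ) ^ (1 - β) ≤ (O.card : ℝ) → 2 * O.card ≤ n →
            (((Finset.univ.powersetCard t).filter
                (fun T : Finset V => ((Finset.univ \ T) \ O).card ≤ (T \ O).card)).card : ℝ)
              ≤ (1 / 2 + ε) * (n.choose t) := by
  intro ε hε
  -- `n^(-β) ≤ 1/4` gives `(t - b)(t - b + 1) ≤ |O| ≤ t`; `n^(-β) ≤ ε²/32` makes the window small.
  obtain ⟨N, hN⟩ := Filter.eventually_atTop.mp ((Filter.eventually_ge_atTop 1).and
    (((tendsto_rpow_neg_atTop hβ0).comp tendsto_natCast_atTop_atTop).eventually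
      (eventually_le_nhds (show (0 : ℝ) < min (1 / 4) (ε ^ 2 / 32) by positivity))))
  refine ⟨N, fun n hn V _ _ hV t b htb hbt hgap O hOlow hOhigh => ?_⟩
  obtain ⟨hn1, hδ⟩ := hN n hn
  simp only [Function.comp_apply, le_min_iff] at hδ
  have hsm : #Oᶜ + #O = n := by rw [card_compl, hV]; have := card_le_univ O; omega
  rw [← Nat.cast_sub hbt] at hgap
  have hd₁ := succ_sq_le_four_mul_rpow_neg_mul hβ1 hn1 hgap hOlow hδ.1
  have hd₂ := succ_sq_le_four_mul_rpow_neg_mul hβ1 hn1 hgap hOlow hδ.2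
  have hdt : (t - b) * (t - b + 1) ≤ t := by
    have : (((t - b) * (t - b + 1) : ℕ) : ℝ) ≤ #O := by push_cast; nlinarith
    have : (t - b) * (t - b + 1) ≤ #O := by exact_mod_cast this
    omega
  have hcentral : 4 ^ n ≤ 16 * n * n.choose t ^ 2 :=
    calc 4 ^ n ≤ 4 * n * n.choose (n / 2) ^ 2 := Nat.four_pow_le_mul_choose_half_sq hn1
      _ ≤ 4 * n * (2 * n.choose t) ^ 2 := by
          gcongr; exact Nat.choose_half_le_two_mul_choose htb hbt hdt
      _ = 16 * n * n.choose t ^ 2 := by ring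
  have herr := succ_mul_choose_half_mul_choose_half_le (d := t - b) hε.le (by rwa [hsm])
    (by omega) (by linarith)
  have hcount := two_mul_card_filter_le O (htb.trans hV.symm) hbt
  rw [hV] at hcount
  have := (Nat.cast_le (α := ℝ)).mpr hcount
  push_cast at this herr
  linarith
end

section
/- Let 0 < δ < 1/4 and let G be a δ-excellent expander on a finite vertex set V with |V| = n, and suppose (1/4 + δ/2)·n is an integer. Let T ⊆ V with |T| = (1/2 + δ)·n, and let r be a report function on G with fewer than δn truthful errors with respect to T. Let X, Y ⊆ V be disjoint sets with |X| = |Y| = (1/4 + δ/2)·n, and suppose the number of adjacent pairs (x, y) with x ∈ X and y ∈ Y such that r(x,y) = false or r(y,x) = false is less than δn. Then |(X ∪ Y) \ T| < 6δn and |T \ (X ∪ Y)| < 6δn; in particular the symmetric difference satisfies |(X ∪ Y) Δ T| < 12δn. -/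
/-!
Split `X ∪ Y` into its truthful and corrupt parts. An edge from a truthful `a ∈ X` to a corrupt
`b ∈ Y` is either a truthful error (if `a` reports `b` truthful) or a bad `X`–`Y` pair (if not),
so such edges are covered by fewer than `2δn` pairs. If `|X ∩ T| ≥ δn`, expansion leaves fewer
than `δn` corrupt vertices of `Y` without a truthful neighbour in `X`, and each of the others
occurs in one of those pairs, whence `|Y \ T| < 3δn`; symmetrically for `X \ T`. Since
`|X ∪ Y| + |T| = n + 2δn`, at least one of `X ∩ T`, `Y ∩ T` has `δn` elements, and if only one
does, the other half of `X ∪ Y` is so corrupt that `δ > 1/14`, where the trivial bound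
`|(X ∪ Y) \ T| ≤ n - |T|` already suffices. Finally `|T| = |X ∪ Y|` makes the two differences
equally large.
-/

open Finset

variable {V : Type*}

/-- For `c = δn` this is a `δ`-excellent expander. -/
def SimpleGraph.IsExcellentExpander (G : SimpleGraph V) (c : ℝ) : Prop :=
  ∀ A B : Finset V, Disjoint A B → c ≤ (#A : ℝ) → c ≤ (#B : ℝ) → ∃ a ∈ A, ∃ b ∈ B, G.Adj a b

namespace SimpleGraph.IsExcellentExpander

variable {G : SimpleGraph V} [DecidableRel G.Adj] {c : ℝ}

theorem card_filter_forall_not_adj_lt (hG : G.IsExcellentExpander c) {A B : Finset V}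
    (hAB : Disjoint A B) (hA : c ≤ (#A : ℝ)) :
    (#(B.filter fun b => ∀ a ∈ A, ¬G.Adj a b) : ℝ) < c := by
  by_contra! h
  obtain ⟨a, ha, b, hb, hab⟩ := hG A _ (hAB.mono_right (filter_subset _ _)) hA h
  exact (mem_filter.mp hb).2 a ha hab

variable [DecidableEq V]

theorem card_lt_add_card_of_adj_mem (hG : G.IsExcellentExpander c) {S A B : Finset V}
    (hAS : A ⊆ S) (hBS : Disjoint B S) (hA : c ≤ (#A : ℝ)) {P : Finset (V × V)}
    (hP : ∀ a ∈ A, ∀ b ∈ B, G.Adj a b → (a, b) ∈ P ∨ (b, a) ∈ P) :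
    (#B : ℝ) < c + #P := by
  -- the endpoint of a recorded edge that lies outside `S`
  let outer : V × V → V := fun p => if p.1 ∈ S then p.2 else p.1
  have hcover : B ⊆ B.filter (fun b => ∀ a ∈ A, ¬G.Adj a b) ∪ P.image outer := by
    intro b hb
    by_cases hnb : ∃ a ∈ A, G.Adj a b
    swap
    · exact mem_union_left _ (mem_filter.mpr ⟨hb, fun a ha hab => hnb ⟨a, ha, hab⟩⟩)
    obtain ⟨a, ha, hab⟩ := hnb
    have hbS : b ∉ S := Finset.disjoint_left.mp hBS hb
    refine mem_union_right _ (mem_image.mpr ?_)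
    rcases hP a ha b hb hab with h | h
    · exact ⟨_, h, if_pos (hAS ha)⟩
    · exact ⟨_, h, if_neg hbS⟩
  have hcard : #B ≤ #(B.filter fun b => ∀ a ∈ A, ¬G.Adj a b) + #P :=
    (card_le_card hcover).trans ((card_union_le _ _).trans (Nat.add_le_add_left card_image_le _))
  have hsmall := hG.card_filter_forall_not_adj_lt (Finset.disjoint_left.mpr fun _ ha hb =>
    Finset.disjoint_left.mp hBS hb (hAS ha)) hA
  have : (#B : ℝ) ≤ #(B.filter fun b => ∀ a ∈ A, ¬G.Adj a b) + #P := by exact_mod_cast hcard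
  linarith

end SimpleGraph.IsExcellentExpander

section Reports

variable [Fintype V] [DecidableEq V] (G : SimpleGraph V) [DecidableRel G.Adj]

def truthfulErrors (T : Finset V) (r : V → V → Bool) : Finset (V × V) :=
  univ.filter fun p => G.Adj p.1 p.2 ∧ p.1 ∈ T ∧ r p.1 p.2 ≠ decide (p.2 ∈ T)

def negativeReports (X Y : Finset V) (r : V → V → Bool) : Finset (V × V) :=
  univ.filter fun p => p.1 ∈ X ∧ p.2 ∈ Y ∧ G.Adj p.1 p.2 ∧ (r p.1 p.2 = false ∨ r p.2 p.1 = false)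

variable {G}

theorem report_eq_false_or_mem_truthfulErrors {T : Finset V} (r : V → V → Bool) {a b : V}
    (hab : G.Adj a b) (ha : a ∈ T) (hb : b ∉ T) :
    r a b = false ∨ (a, b) ∈ truthfulErrors G T r := by
  cases h : r a b
  · exact Or.inl rfl
  · exact Or.inr (mem_filter.mpr ⟨mem_univ _, hab, ha, by simp [h, hb]⟩)

theorem card_lt_of_report_eq_false_mem {c : ℝ} (hG : G.IsExcellentExpander c)
    {T A B : Finset V} (hAT : A ⊆ T) (hBT : Disjoint B T) (hA : c ≤ (#A : ℝ)) (r : V → V → Bool)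
    {Q : Finset (V × V)}
    (hQ : ∀ a ∈ A, ∀ b ∈ B, G.Adj a b → r a b = false → (a, b) ∈ Q ∨ (b, a) ∈ Q) :
    (#B : ℝ) < c + #(truthfulErrors G T r) + #Q := by
  have hB := hG.card_lt_add_card_of_adj_mem hAT hBT hA (P := truthfulErrors G T r ∪ Q)
    fun a ha b hb hab => by
      rcases report_eq_false_or_mem_truthfulErrors r hab (hAT ha)
        (Finset.disjoint_left.mp hBT hb) with h | h
      · exact (hQ a ha b hb hab h).imp (mem_union_right _) (mem_union_right _)
      · exact Or.inl (mem_union_left _ h)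
  have : (#(truthfulErrors G T r ∪ Q) : ℝ) ≤ #(truthfulErrors G T r) + #Q := by
    exact_mod_cast card_union_le _ _
  linarith

variable {c : ℝ} {T : Finset V} {r : V → V → Bool}

theorem card_sdiff_lt_of_le_card_inter (hG : G.IsExcellentExpander c)
    (hE : (#(truthfulErrors G T r) : ℝ) < c) {X Y : Finset V}
    (hQ : (#(negativeReports G X Y r) : ℝ) < c) :
    (c ≤ (#(X ∩ T) : ℝ) → (#(Y \ T) : ℝ) < 3 * c) ∧
      (c ≤ (#(Y ∩ T) : ℝ) → (#(X \ T) : ℝ) < 3 * c) := by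
  constructor
  · intro hA
    have := card_lt_of_report_eq_false_mem hG inter_subset_right sdiff_disjoint hA r
      (B := Y \ T) (Q := negativeReports G X Y r) fun a ha b hb hab h =>
        Or.inl (mem_filter.mpr ⟨mem_univ _, (mem_inter.mp ha).1, (mem_sdiff.mp hb).1, hab, .inl h⟩)
    linarith
  · intro hA
    have := card_lt_of_report_eq_false_mem hG inter_subset_right sdiff_disjoint hA r
      (B := X \ T) (Q := negativeReports G X Y r) fun a ha b hb hab h =>
        Or.inr (mem_filter.mpr ⟨mem_univ _, (mem_sdiff.mp hb).1, (mem_inter.mp ha).1, hab.symm,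
          .inr h⟩)
    linarith

end Reports

theorem statement3_general (δ : ℝ)
    (V : Type) [Fintype V] [DecidableEq V]
    (G : SimpleGraph V) [DecidableRel G.Adj] (n : ℕ) (hn : Fintype.card V = n)
    (hexp : ∀ A B : Finset V, Disjoint A B → δ * n ≤ (A.card : ℝ) → δ * n ≤ (B.card : ℝ) →
      ∃ a ∈ A, ∃ b ∈ B, G.Adj a b)
    (T : Finset V) (hT : (T.card : ℝ) = (1 / 2 + δ) * n)
    (r : V → V → Bool)
    (hr : ((Finset.univ.filter (fun p : V × V =>
        G.Adj p.1 p.2 ∧ p.1 ∈ T ∧ r p.1 p.2 ≠ decide (p.2 ∈ T))).card : ℝ) < δ * n)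
    (X Y : Finset V) (hXY : Disjoint X Y)
    (hX : (X.card : ℝ) = (1 / 4 + δ / 2) * n) (hY : (Y.card : ℝ) = (1 / 4 + δ / 2) * n)
    (hbad : ((Finset.univ.filter (fun p : V × V =>
        p.1 ∈ X ∧ p.2 ∈ Y ∧ G.Adj p.1 p.2 ∧
          (r p.1 p.2 = false ∨ r p.2 p.1 = false))).card : ℝ) < δ * n) :
    (((X ∪ Y) \ T).card : ℝ) < 6 * δ * n ∧ ((T \ (X ∪ Y)).card : ℝ) < 6 * δ * n ∧
      (((X ∪ Y) \ T ∪ T \ (X ∪ Y)).card : ℝ) < 12 * δ * n := by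
  obtain ⟨hYT, hXT⟩ := card_sdiff_lt_of_le_card_inter hexp hr hbad
  have hXsplit : (#(X ∩ T) + #(X \ T) : ℝ) = #X := by exact_mod_cast card_inter_add_card_sdiff X T
  have hYsplit : (#(Y ∩ T) + #(Y \ T) : ℝ) = #Y := by exact_mod_cast card_inter_add_card_sdiff Y T
  have hdiff : (#((X ∪ Y) \ T) : ℝ) = #(X \ T) + #(Y \ T) := by
    rw [union_sdiff_distrib]
    exact_mod_cast card_union_of_disjoint (hXY.mono sdiff_subset sdiff_subset)
  have hcompl : (#((X ∪ Y) \ T) + #T : ℝ) ≤ n := by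
    rw [← hn]
    exact_mod_cast (card_union_of_disjoint sdiff_disjoint).symm.trans_le (card_le_univ _)
  have hmain : (#((X ∪ Y) \ T) : ℝ) < 6 * δ * n := by
    rcases le_or_gt (δ * n) (#(X ∩ T) : ℝ) with hx | hx <;>
      rcases le_or_gt (δ * n) (#(Y ∩ T) : ℝ) with hy | hy
    · linarith [hYT hx, hXT hy]
    · linarith [hYT hx]
    · linarith [hXT hy]
    · linarith
  have hsymm : #(T \ (X ∪ Y)) = #((X ∪ Y) \ T) := by
    refine card_sdiff_comm ?_
    have : (#(X ∪ Y) : ℝ) = #X + #Y := by exact_mod_cast card_union_of_disjoint hXY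
    exact_mod_cast (show (#T : ℝ) = #(X ∪ Y) by linarith)
  rw [card_union_of_disjoint disjoint_sdiff_sdiff, hsymm]
  push_cast
  exact ⟨hmain, hmain, by linarith⟩

/-- Let `0 < δ < 1/4` and let `G` be a `δ`-excellent expander on `V`,
`|V| = n`, with `(1/4 + δ/2)·n` an integer.  Suppose `|T| = (1/2 + δ)·n` and the report
function `r` has fewer than `δn` truthful errors with respect to `T`.  If `X, Y` are disjoint
sets with `|X| = |Y| = (1/4 + δ/2)·n` such that fewer than `δn` adjacent pairs `(x, y)` with
`x ∈ X`, `y ∈ Y` have `r x y = false` or `r y x = false`, then `|(X ∪ Y) \ T| < 6δn`,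
`|T \ (X ∪ Y)| < 6δn`, and `|(X ∪ Y) Δ T| < 12δn`.  (The integrality of `(1/4 + δ/2)·n` is
encoded by the cardinality hypotheses on `X` and `Y`.) -/
theorem statement3 (δ : ℝ) (hδ0 : 0 < δ) (hδ1 : δ < 1 / 4)
    (V : Type) [Fintype V] [DecidableEq V]
    (G : SimpleGraph V) [DecidableRel G.Adj] (n : ℕ) (hn : Fintype.card V = n)
    (hexp : ∀ A B : Finset V, Disjoint A B → δ * n ≤ (A.card : ℝ) → δ * n ≤ (B.card : ℝ) →
      ∃ a ∈ A, ∃ b ∈ B, G.Adj a b)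
    (T : Finset V) (hT : (T.card : ℝ) = (1 / 2 + δ) * n)
    (r : V → V → Bool)
    (hr : ((Finset.univ.filter (fun p : V × V =>
        G.Adj p.1 p.2 ∧ p.1 ∈ T ∧ r p.1 p.2 ≠ decide (p.2 ∈ T))).card : ℝ) < δ * n)
    (X Y : Finset V) (hXY : Disjoint X Y)
    (hX : (X.card : ℝ) = (1 / 4 + δ / 2) * n) (hY : (Y.card : ℝ) = (1 / 4 + δ / 2) * n)
    (hbad : ((Finset.univ.filter (fun p : V × V =>
        p.1 ∈ X ∧ p.2 ∈ Y ∧ G.Adj p.1 p.2 ∧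
          (r p.1 p.2 = false ∨ r p.2 p.1 = false))).card : ℝ) < δ * n) :
    (((X ∪ Y) \ T).card : ℝ) < 6 * δ * n ∧ ((T \ (X ∪ Y)).card : ℝ) < 6 * δ * n ∧
      (((X ∪ Y) \ T ∪ T \ (X ∪ Y)).card : ℝ) < 12 * δ * n :=
  statement3_general δ V G n hn hexp T hT r hr X Y hXY hX hY hbad
end

section
/- Let 0 < δ < 1/4 and let G be a δ-excellent expander on a finite vertex set V with |V| = n. Let T ⊆ V and let r be a report function on G with fewer than δn truthful errors with respect to T. Let X, Y ⊆ V be disjoint sets such that the number of adjacent pairs (x, y) with x ∈ X and y ∈ Y satisfying r(x,y) = false or r(y,x) = false is less than δn. If |X ∩ T| ≥ δn, then |Y \ T| < 3δn. -/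
/-!
Let `A = X ∩ T` and `B = Y \ T`. An edge from a truthful `a ∈ A` to a corrupt `b ∈ B` is
either a truthful error (`r a b = true`) or an accusation between `X` and `Y` (`r a b = false`),
so there are fewer than `2δn` such edges, and fewer than `2δn` vertices of `B` have a neighbour
in `A`. The vertices of `B` with no neighbour in `A` number fewer than `δn` by expansion, since
`|A| ≥ δn`. Hence `|B| < 3δn`.
-/

open Finset

namespace SimpleGraph

variable {V : Type*} (G : SimpleGraph V) [DecidableRel G.Adj]

theorem card_filter_not_adj_lt {m : ℝ}
    (hexp : ∀ A B : Finset V, Disjoint A B → m ≤ #A → m ≤ #B →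
      ∃ a ∈ A, ∃ b ∈ B, G.Adj a b)
    {A B : Finset V} (hAB : Disjoint A B) (hA : m ≤ #A) :
    (#(B.filter fun b => ∀ a ∈ A, ¬G.Adj a b) : ℝ) < m := by
  by_contra! hB
  obtain ⟨a, ha, b, hb, hadj⟩ := hexp A _ (hAB.mono_right (filter_subset _ _)) hA hB
  exact (mem_filter.mp hb).2 a ha hadj

theorem card_le_card_filter_not_adj_add_card_interedges [DecidableEq V] (A B : Finset V) :
    #B ≤ #(B.filter fun b => ∀ a ∈ A, ¬G.Adj a b) + #(G.interedges A B) := by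
  have hcover :
      B ⊆ B.filter (fun b => ∀ a ∈ A, ¬G.Adj a b) ∪ (G.interedges A B).image Prod.snd := by
    intro b hb
    by_cases hiso : ∀ a ∈ A, ¬G.Adj a b
    · exact mem_union_left _ (mem_filter.mpr ⟨hb, hiso⟩)
    · obtain ⟨a, ha, hadj⟩ : ∃ a ∈ A, G.Adj a b := by simpa using hiso
      exact mem_union_right _ <|
        mem_image.mpr ⟨(a, b), G.mem_interedges_iff.mpr ⟨ha, hb, hadj⟩, rfl⟩
  calc #B ≤ _ := card_le_card hcover
    _ ≤ _ := card_union_le _ _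
    _ ≤ _ := Nat.add_le_add_left card_image_le _

variable [Fintype V] [DecidableEq V]

def truthfulErrors (T : Finset V) (r : V → V → Bool) : Finset (V × V) :=
  univ.filter fun p => G.Adj p.1 p.2 ∧ p.1 ∈ T ∧ r p.1 p.2 ≠ decide (p.2 ∈ T)

def accusingPairs (r : V → V → Bool) (X Y : Finset V) : Finset (V × V) :=
  univ.filter fun p =>
    p.1 ∈ X ∧ p.2 ∈ Y ∧ G.Adj p.1 p.2 ∧ (r p.1 p.2 = false ∨ r p.2 p.1 = false)

theorem interedges_inter_sdiff_subset (T : Finset V) (r : V → V → Bool) (X Y : Finset V) :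
    G.interedges (X ∩ T) (Y \ T) ⊆ G.truthfulErrors T r ∪ G.accusingPairs r X Y := by
  rintro ⟨a, b⟩ hab
  obtain ⟨haXT, hbYT, hadj⟩ := G.mem_interedges_iff.mp hab
  obtain ⟨haX, haT⟩ := mem_inter.mp haXT
  obtain ⟨hbY, hbT⟩ := mem_sdiff.mp hbYT
  cases hr : r a b
  · exact mem_union_right _ <| by simp [accusingPairs, haX, hbY, hadj, hr]
  · exact mem_union_left _ <| by simp [truthfulErrors, hadj, haT, hbT, hr]

end SimpleGraph

theorem statement5_general (δ : ℝ)
    (V : Type) [Fintype V] [DecidableEq V]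
    (G : SimpleGraph V) [DecidableRel G.Adj] (n : ℕ)
    (hexp : ∀ A B : Finset V, Disjoint A B → δ * n ≤ (A.card : ℝ) → δ * n ≤ (B.card : ℝ) →
      ∃ a ∈ A, ∃ b ∈ B, G.Adj a b)
    (T : Finset V) (r : V → V → Bool)
    (hr : ((Finset.univ.filter (fun p : V × V =>
        G.Adj p.1 p.2 ∧ p.1 ∈ T ∧ r p.1 p.2 ≠ decide (p.2 ∈ T))).card : ℝ) < δ * n)
    (X Y : Finset V) (hXY : Disjoint X Y)
    (hbad : ((Finset.univ.filter (fun p : V × V =>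
        p.1 ∈ X ∧ p.2 ∈ Y ∧ G.Adj p.1 p.2 ∧
          (r p.1 p.2 = false ∨ r p.2 p.1 = false))).card : ℝ) < δ * n)
    (hXT : δ * n ≤ ((X ∩ T).card : ℝ)) :
    ((Y \ T).card : ℝ) < 3 * δ * n := by
  have hedges : (#(G.interedges (X ∩ T) (Y \ T)) : ℝ)
      ≤ #(G.truthfulErrors T r) + #(G.accusingPairs r X Y) := by
    exact_mod_cast (card_le_card (G.interedges_inter_sdiff_subset T r X Y)).trans
      (card_union_le _ _)
  have hisolated := G.card_filter_not_adj_lt hexp (B := Y \ T)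
    (hXY.mono inter_subset_left sdiff_subset) hXT
  have hsplit : (#(Y \ T) : ℝ) ≤ _ :=
    Nat.cast_le.mpr (G.card_le_card_filter_not_adj_add_card_interedges (X ∩ T) (Y \ T))
  push_cast at hsplit
  unfold SimpleGraph.truthfulErrors SimpleGraph.accusingPairs at hedges
  linarith

/-- Let `0 < δ < 1/4` and let `G` be a `δ`-excellent expander on `V`,
`|V| = n`.  Let `T ⊆ V` and let `r` be a report function with fewer than `δn` truthful
errors with respect to `T`.  Let `X, Y` be disjoint sets such that fewer than `δn` adjacent
pairs `(x, y)` with `x ∈ X`, `y ∈ Y` satisfy `r x y = false` or `r y x = false`.  If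
`|X ∩ T| ≥ δn`, then `|Y \ T| < 3δn`. -/
theorem statement5 (δ : ℝ) (hδ0 : 0 < δ) (hδ1 : δ < 1 / 4)
    (V : Type) [Fintype V] [DecidableEq V]
    (G : SimpleGraph V) [DecidableRel G.Adj] (n : ℕ) (hn : Fintype.card V = n)
    (hexp : ∀ A B : Finset V, Disjoint A B → δ * n ≤ (A.card : ℝ) → δ * n ≤ (B.card : ℝ) →
      ∃ a ∈ A, ∃ b ∈ B, G.Adj a b)
    (T : Finset V) (r : V → V → Bool)
    (hr : ((Finset.univ.filter (fun p : V × V =>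
        G.Adj p.1 p.2 ∧ p.1 ∈ T ∧ r p.1 p.2 ≠ decide (p.2 ∈ T))).card : ℝ) < δ * n)
    (X Y : Finset V) (hXY : Disjoint X Y)
    (hbad : ((Finset.univ.filter (fun p : V × V =>
        p.1 ∈ X ∧ p.2 ∈ Y ∧ G.Adj p.1 p.2 ∧
          (r p.1 p.2 = false ∨ r p.2 p.1 = false))).card : ℝ) < δ * n)
    (hXT : δ * n ≤ ((X ∩ T).card : ℝ)) :
    ((Y \ T).card : ℝ) < 3 * δ * n :=
  statement5_general δ V G n hexp T r hr X Y hXY hbad hXT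
end
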